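/- Let G be a finite bipartite graph with bipartition (U, V), and let a, b be two vertices of G such that either a and b lie in different connected components of G, or the graph distance between a and b in G is at least 4. Then there exists an optimal bicluster editing H of G in which a and b lie in different connected components of H (i.e., in distinct biclusters). -/

import Mathlib

variable {α : Type*}

/-- `G` is a bipartite graph with bipartition `(U, V)`: the parts cover the vertex set,
are disjoint, and every edge joins a vertex of `U` to a vertex of `V`. -/
def IsBipartiteWith (G : SimpleGraph α) (U V : Set α) : Prop :=
  (∀ x, x ∈ U ∨ x ∈ V) ∧ Disjoint U V ∧
    ∀ ⦃x y⦄, G.Adj x y → (x ∈ U ∧ y ∈ V) ∨ (x ∈ V ∧ y ∈ U)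

/-- A bicluster graph with bipartition `(U, V)`: a bipartite graph each of whose connected
components is a complete bipartite graph, i.e. any two vertices of `U` and `V` lying in the
same connected component are adjacent. -/
def IsBiclusterGraph (G : SimpleGraph α) (U V : Set α) : Prop :=
  IsBipartiteWith G U V ∧ ∀ i ∈ U, ∀ j ∈ V, G.Reachable i j → G.Adj i j

/-- `G` contains the path on four vertices `P4` as an induced subgraph. -/
def HasInducedP4 (G : SimpleGraph α) : Prop :=
  ∃ a b c d : α, a ≠ b ∧ a ≠ c ∧ a ≠ d ∧ b ≠ c ∧ b ≠ d ∧ c ≠ d ∧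
    G.Adj a b ∧ G.Adj b c ∧ G.Adj c d ∧ ¬ G.Adj a c ∧ ¬ G.Adj b d ∧ ¬ G.Adj a d

/-- The edit cost of `H` relative to `G`: number of edge deletions plus edge additions. -/
noncomputable def editCost (G H : SimpleGraph α) : ℕ :=
  (G.edgeSet \ H.edgeSet).ncard + (H.edgeSet \ G.edgeSet).ncard

/-- `H` is an optimal bicluster editing of `G` with respect to the bipartition `(U, V)`. -/
def IsOptimalBiclusterEditing (G H : SimpleGraph α) (U V : Set α) : Prop :=
  IsBiclusterGraph H U V ∧
    ∀ H' : SimpleGraph α, IsBiclusterGraph H' U V → editCost G H ≤ editCost G H'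

/-- The grouping efficacy `(m - d) / (m + a)` of `H` relative to `G`, where `m = |E(G)|`,
`d` is the number of deleted edges and `a` the number of added edges. -/
noncomputable def efficacy (G H : SimpleGraph α) : ℝ :=
  ((G.edgeSet.ncard : ℝ) - ((G.edgeSet \ H.edgeSet).ncard : ℝ)) /
    ((G.edgeSet.ncard : ℝ) + ((H.edgeSet \ G.edgeSet).ncard : ℝ))

/-!
Start from an optimal editing `H` in which `a` and `b` share a bicluster with sides `X ⊆ U` and
`Y ⊆ V`. Deleting from `H` all edges between a vertex set `S` inside this bicluster and its
complement leaves a bicluster graph, and changes the cost by (edges of `G` deleted) − (non-edges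
of `G` deleted).

If `a, b ∈ U`, they have no common neighbour in `G`, so one of them, say `a`, is adjacent to at
most half of `Y`, and isolating `a` does not increase the cost. If `a ∈ U` and `b ∈ V`, let
`N = N_G(a) ∩ Y` and `M = N_G(b) ∩ X`. Isolating `a` or `b` works unless `|N| > |Y| / 2` and
`|M| > |X| / 2`; then cut along `S = (X \ M) ∪ N`. The cut edges are `(X \ M) × (Y \ N)` and
`M × N`; the latter contains no edge of `G` (it would close an `a`–`b` path of length 3) and is
the larger of the two.
-/

variable {G H H' : SimpleGraph α} {U V S : Set α} {a b x y : α}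

namespace IsBipartiteWith

lemma symm (h : IsBipartiteWith G U V) : IsBipartiteWith G V U :=
  ⟨fun x => (h.1 x).symm, h.2.1.symm, fun _ _ hxy => (h.2.2 hxy).symm⟩

lemma mem_right_of_adj (h : IsBipartiteWith G U V) (hx : x ∈ U) (hxy : G.Adj x y) : y ∈ V :=
  ((h.2.2 hxy).resolve_right fun h' => Set.disjoint_left.mp h.2.1 hx h'.1).2

end IsBipartiteWith

lemma isBiclusterGraph_bot (hcover : ∀ x, x ∈ U ∨ x ∈ V) (hUV : Disjoint U V) :
    IsBiclusterGraph (⊥ : SimpleGraph α) U V := by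
  refine ⟨⟨hcover, hUV, fun _ _ h => h.elim⟩, fun i hi j hj hij => ?_⟩
  rw [SimpleGraph.reachable_bot] at hij
  exact (Set.disjoint_left.mp hUV hi (hij ▸ hj)).elim

lemma exists_isOptimalBiclusterEditing (G : SimpleGraph α) (hcover : ∀ x, x ∈ U ∨ x ∈ V)
    (hUV : Disjoint U V) : ∃ H, IsOptimalBiclusterEditing G H U V := by
  obtain ⟨H, hH, hmin⟩ := exists_minimalFor_of_wellFoundedLT (IsBiclusterGraph · U V)
    (editCost G) ⟨⊥, isBiclusterGraph_bot hcover hUV⟩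
  exact ⟨H, hH, fun H' hH' => (le_total _ _).elim id (hmin hH')⟩

namespace SimpleGraph

def splitAlong (H : SimpleGraph α) (S : Set α) : SimpleGraph α where
  Adj x y := H.Adj x y ∧ (x ∈ S ↔ y ∈ S)
  symm := ⟨fun _ _ h => ⟨h.1.symm, h.2.symm⟩⟩
  loopless := ⟨fun x h => H.loopless.irrefl x h.1⟩

lemma splitAlong_le : H.splitAlong S ≤ H := fun _ _ h => h.1

lemma Reachable.mem_iff_of_splitAlong (h : (H.splitAlong S).Reachable x y) : x ∈ S ↔ y ∈ S := by
  obtain ⟨w⟩ := h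
  induction w with
  | nil => rfl
  | cons hadj _ ih => exact hadj.2.trans ih

lemma not_reachable_splitAlong (ha : a ∈ S) (hb : b ∉ S) : ¬(H.splitAlong S).Reachable a b :=
  fun h => hb (h.mem_iff_of_splitAlong.mp ha)

end SimpleGraph

lemma editCost_le_of_le [Finite α] (hle : H' ≤ H)
    (h : ((H.edgeSet \ H'.edgeSet) ∩ G.edgeSet).ncard ≤
      ((H.edgeSet \ H'.edgeSet) \ G.edgeSet).ncard) :
    editCost G H' ≤ editCost G H := by
  have hsub : H'.edgeSet ⊆ H.edgeSet := SimpleGraph.edgeSet_subset_edgeSet.mpr hle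
  have hdel : G.edgeSet \ H'.edgeSet =
      (G.edgeSet \ H.edgeSet) ∪ ((H.edgeSet \ H'.edgeSet) ∩ G.edgeSet) := by
    ext e; simp only [Set.mem_sdiff, Set.mem_union, Set.mem_inter_iff]; grind
  have hadd : H.edgeSet \ G.edgeSet =
      (H'.edgeSet \ G.edgeSet) ∪ ((H.edgeSet \ H'.edgeSet) \ G.edgeSet) := by
    ext e; simp only [Set.mem_sdiff, Set.mem_union]; grind
  have hdel_disj : Disjoint (G.edgeSet \ H.edgeSet) ((H.edgeSet \ H'.edgeSet) ∩ G.edgeSet) :=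
    Set.disjoint_left.mpr fun _ he he' => he.2 he'.1.1
  have hadd_disj : Disjoint (H'.edgeSet \ G.edgeSet) ((H.edgeSet \ H'.edgeSet) \ G.edgeSet) :=
    Set.disjoint_left.mpr fun _ he he' => he'.1.2 he.1
  unfold editCost
  rw [hdel, hadd, Set.ncard_union_eq hdel_disj, Set.ncard_union_eq hadd_disj]
  omega

lemma editCost_le_of_edgeSet_sdiff_eq_image [Finite α] {P : Set (α × α)} (hle : H' ≤ H)
    (hP : H.edgeSet \ H'.edgeSet = Sym2.mk.uncurry '' P) (hinj : Set.InjOn Sym2.mk.uncurry P)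
    (h : {p ∈ P | G.Adj p.1 p.2}.ncard ≤ {p ∈ P | ¬ G.Adj p.1 p.2}.ncard) :
    editCost G H' ≤ editCost G H := by
  apply editCost_le_of_le hle
  rwa [hP, ← Set.image_inter_preimage, ← Set.image_sdiff_preimage,
    (hinj.mono Set.inter_subset_left).ncard_image,
    (hinj.mono Set.sdiff_subset).ncard_image]

lemma injOn_sym2Mk_prod (hUV : Disjoint U V) : Set.InjOn Sym2.mk.uncurry (U ×ˢ V) := by
  rintro ⟨x, y⟩ ⟨hx, hy⟩ ⟨x', y'⟩ ⟨hx', hy'⟩ he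
  rcases Sym2.eq_iff.mp he with ⟨rfl, rfl⟩ | ⟨rfl, rfl⟩
  · rfl
  · exact (Set.disjoint_left.mp hUV hx hy').elim

namespace IsBiclusterGraph

variable {C : H.ConnectedComponent}

lemma symm (h : IsBiclusterGraph H U V) : IsBiclusterGraph H V U :=
  ⟨h.1.symm, fun i hi j hj hr => (h.2 j hj i hi hr.symm).symm⟩

lemma splitAlong (hH : IsBiclusterGraph H U V) (S : Set α) :
    IsBiclusterGraph (H.splitAlong S) U V :=
  ⟨⟨hH.1.1, hH.1.2.1, fun _ _ h => hH.1.2.2 h.1⟩, fun i hi j hj hr =>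
    ⟨hH.2 i hi j hj (hr.mono SimpleGraph.splitAlong_le), hr.mem_iff_of_splitAlong⟩⟩

lemma adj_of_mem_supp (hH : IsBiclusterGraph H U V) (hx : x ∈ U ∩ C.supp)
    (hy : y ∈ V ∩ C.supp) : H.Adj x y :=
  hH.2 x hx.1 y hy.1 (C.reachable_of_mem_supp hx.2 hy.2)

lemma edgeSet_sdiff_splitAlong (hH : IsBiclusterGraph H U V) (hS : S ⊆ C.supp) :
    H.edgeSet \ (H.splitAlong S).edgeSet = Sym2.mk.uncurry ''
      ((U ∩ S) ×ˢ ((V ∩ C.supp) \ S) ∪ ((U ∩ C.supp) \ S) ×ˢ (V ∩ S)) := by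
  have hcut : ∀ x y, x ∈ U → y ∈ V → H.Adj x y → ¬(x ∈ S ↔ y ∈ S) →
      (x, y) ∈ (U ∩ S) ×ˢ ((V ∩ C.supp) \ S) ∪ ((U ∩ C.supp) \ S) ×ˢ (V ∩ S) := by
    intro x y hx hy hxy hxyS
    have hxC : x ∈ C.supp ↔ y ∈ C.supp := ⟨(C.mem_supp_of_adj_mem_supp · hxy),
      (C.mem_supp_of_adj_mem_supp · hxy.symm)⟩
    simp only [Set.mem_union, Set.mem_prod, Set.mem_inter_iff, Set.mem_sdiff]
    grind
  apply Set.Subset.antisymm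
  · rintro e ⟨he, hecut⟩
    induction e using Sym2.ind with
    | _ x y =>
      have hxyS : ¬(x ∈ S ↔ y ∈ S) := fun h => hecut ⟨he, h⟩
      rcases hH.1.2.2 he with ⟨hx, hy⟩ | ⟨hx, hy⟩
      · exact ⟨(x, y), hcut x y hx hy he hxyS, rfl⟩
      · exact ⟨(y, x), hcut y x hy hx he.symm (hxyS ∘ Iff.symm), Sym2.eq_swap⟩
  · rintro _ ⟨⟨x, y⟩, hxy, rfl⟩
    rcases hxy with ⟨⟨hxU, hxS⟩, ⟨hyV, hyC⟩, hyS⟩ | ⟨⟨⟨hxU, hxC⟩, hxS⟩, hyV, hyS⟩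
    · exact ⟨hH.adj_of_mem_supp ⟨hxU, hS hxS⟩ ⟨hyV, hyC⟩, fun h => hyS (h.2.mp hxS)⟩
    · exact ⟨hH.adj_of_mem_supp ⟨hxU, hxC⟩ ⟨hyV, hS hyS⟩, fun h => hxS (h.2.mpr hyS)⟩

lemma editCost_splitAlong_singleton_le [Finite α] (hH : IsBiclusterGraph H U V)
    (hG : IsBipartiteWith G U V) (ha : a ∈ U) (haC : a ∈ C.supp)
    (h : 2 * {y ∈ C.supp | G.Adj a y}.ncard ≤ (V ∩ C.supp).ncard) :
    editCost G (H.splitAlong {a}) ≤ editCost G H := by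
  have haV : a ∉ V := Set.disjoint_left.mp hG.2.1 ha
  have hN : {y ∈ C.supp | G.Adj a y} ⊆ V ∩ C.supp :=
    fun y hy => ⟨hG.mem_right_of_adj ha hy.2, hy.1⟩
  have hP : (U ∩ {a}) ×ˢ ((V ∩ C.supp) \ {a}) ∪ ((U ∩ C.supp) \ {a}) ×ˢ (V ∩ {a}) =
      {a} ×ˢ (V ∩ C.supp) := by
    ext ⟨x, y⟩
    simp only [Set.mem_union, Set.mem_prod, Set.mem_inter_iff, Set.mem_sdiff,
      Set.mem_singleton_iff]
    grind
  refine editCost_le_of_edgeSet_sdiff_eq_image SimpleGraph.splitAlong_le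
    (hP ▸ hH.edgeSet_sdiff_splitAlong (Set.singleton_subset_iff.mpr haC))
    ((injOn_sym2Mk_prod hG.2.1).mono
      (Set.prod_mono (Set.singleton_subset_iff.mpr ha) Set.inter_subset_left)) ?_
  have hadj : {p ∈ {a} ×ˢ (V ∩ C.supp) | G.Adj p.1 p.2} = {a} ×ˢ {y ∈ C.supp | G.Adj a y} := by
    ext ⟨x, y⟩
    simp only [Set.mem_ofPred_eq, Set.mem_prod, Set.mem_singleton_iff]
    grind
  have hnadj : {p ∈ {a} ×ˢ (V ∩ C.supp) | ¬ G.Adj p.1 p.2} =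
      {a} ×ˢ ((V ∩ C.supp) \ {y ∈ C.supp | G.Adj a y}) := by
    ext ⟨x, y⟩
    simp only [Set.mem_ofPred_eq, Set.mem_prod, Set.mem_singleton_iff, Set.mem_sdiff]
    grind
  rw [hadj, hnadj, Set.ncard_prod, Set.ncard_prod, Set.ncard_singleton, Set.ncard_sdiff hN]
  omega

lemma editCost_splitAlong_neighborSets_le [Finite α] (hH : IsBiclusterGraph H U V)
    (hG : IsBipartiteWith G U V) (ha : a ∈ U) (hb : b ∈ V)
    (hpath : ∀ x y, G.Adj a y → G.Adj y x → ¬ G.Adj x b)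
    (hN : (V ∩ C.supp).ncard ≤ 2 * {y ∈ C.supp | G.Adj a y}.ncard)
    (hM : (U ∩ C.supp).ncard ≤ 2 * {x ∈ C.supp | G.Adj b x}.ncard) :
    editCost G (H.splitAlong ((U ∩ C.supp) \ {x ∈ C.supp | G.Adj b x} ∪
      {y ∈ C.supp | G.Adj a y})) ≤ editCost G H := by
  set X := U ∩ C.supp
  set Y := V ∩ C.supp
  set M := {x ∈ C.supp | G.Adj b x}
  set N := {y ∈ C.supp | G.Adj a y}
  have hMX : M ⊆ X := fun x hx => ⟨hG.symm.mem_right_of_adj hb hx.2, hx.1⟩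
  have hNY : N ⊆ Y := fun y hy => ⟨hG.mem_right_of_adj ha hy.2, hy.1⟩
  have hUV := hG.2.1
  have hP : (U ∩ (X \ M ∪ N)) ×ˢ (Y \ (X \ M ∪ N)) ∪ (X \ (X \ M ∪ N)) ×ˢ (V ∩ (X \ M ∪ N)) =
      (X \ M) ×ˢ (Y \ N) ∪ M ×ˢ N := by
    have hXU : X ⊆ U := Set.inter_subset_left
    have hYV : Y ⊆ V := Set.inter_subset_left
    ext ⟨x, y⟩
    simp only [Set.mem_union, Set.mem_prod, Set.mem_inter_iff, Set.mem_sdiff]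
    grind
  have hMN : ∀ p ∈ M ×ˢ N, ¬ G.Adj p.1 p.2 := fun p hp hadj =>
    hpath p.1 p.2 hp.2.2 hadj.symm hp.1.2.symm
  have hS : X \ M ∪ N ⊆ C.supp := Set.union_subset (fun x hx => hx.1.2) fun y hy => hy.1
  refine editCost_le_of_edgeSet_sdiff_eq_image SimpleGraph.splitAlong_le
    (hP ▸ hH.edgeSet_sdiff_splitAlong hS)
    ((injOn_sym2Mk_prod hUV).mono (Set.union_subset
      (Set.prod_mono (fun x hx => hx.1.1) fun y hy => hy.1.1)
      (Set.prod_mono (fun x hx => (hMX hx).1) fun y hy => (hNY hy).1))) ?_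
  calc {p ∈ (X \ M) ×ˢ (Y \ N) ∪ M ×ˢ N | G.Adj p.1 p.2}.ncard
      ≤ ((X \ M) ×ˢ (Y \ N)).ncard :=
        Set.ncard_le_ncard fun p hp => hp.1.resolve_right fun h => hMN p h hp.2
    _ = (X \ M).ncard * (Y \ N).ncard := Set.ncard_prod
    _ ≤ M.ncard * N.ncard := by
        rw [Set.ncard_sdiff hMX, Set.ncard_sdiff hNY]
        exact Nat.mul_le_mul (by omega) (by omega)
    _ = (M ×ˢ N).ncard := Set.ncard_prod.symm
    _ ≤ {p ∈ (X \ M) ×ˢ (Y \ N) ∪ M ×ˢ N | ¬ G.Adj p.1 p.2}.ncard :=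
        Set.ncard_le_ncard fun p hp => ⟨Or.inr hp, hMN p hp⟩

lemma exists_separating_of_mem_same_part [Finite α] (hH : IsBiclusterGraph H U V)
    (hG : IsBipartiteWith G U V) (ha : a ∈ U) (hb : b ∈ U) (hr : H.Reachable a b) (hne : a ≠ b)
    (hcommon : ∀ y, G.Adj a y → ¬ G.Adj b y) :
    ∃ H', IsBiclusterGraph H' U V ∧ editCost G H' ≤ editCost G H ∧ ¬ H'.Reachable a b := by
  obtain ⟨C, haC, hbC⟩ : ∃ C : H.ConnectedComponent, a ∈ C.supp ∧ b ∈ C.supp :=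
    ⟨_, rfl, SimpleGraph.ConnectedComponent.sound hr.symm⟩
  have hN : ∀ {c}, c ∈ U → {y ∈ C.supp | G.Adj c y} ⊆ V ∩ C.supp :=
    fun hc y hy => ⟨hG.mem_right_of_adj hc hy.2, hy.1⟩
  have hdisj : Disjoint {y ∈ C.supp | G.Adj a y} {y ∈ C.supp | G.Adj b y} :=
    Set.disjoint_left.mpr fun y hay hby => hcommon y hay.2 hby.2
  have hsum := Set.ncard_le_ncard (Set.union_subset (hN ha) (hN hb))
  rw [Set.ncard_union_eq hdisj] at hsum
  rcases le_total {y ∈ C.supp | G.Adj a y}.ncard {y ∈ C.supp | G.Adj b y}.ncard with hle | hle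
  · exact ⟨H.splitAlong {a}, hH.splitAlong _,
      hH.editCost_splitAlong_singleton_le hG ha haC (by omega),
      SimpleGraph.not_reachable_splitAlong rfl hne.symm⟩
  · exact ⟨H.splitAlong {b}, hH.splitAlong _,
      hH.editCost_splitAlong_singleton_le hG hb hbC (by omega),
      fun h => SimpleGraph.not_reachable_splitAlong (Set.mem_singleton b) hne h.symm⟩

lemma exists_separating_of_mem_opposite_parts [Finite α] (hH : IsBiclusterGraph H U V)
    (hG : IsBipartiteWith G U V) (ha : a ∈ U) (hb : b ∈ V) (hr : H.Reachable a b)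
    (hadj : ¬ G.Adj a b) (hpath : ∀ x y, G.Adj a y → G.Adj y x → ¬ G.Adj x b) :
    ∃ H', IsBiclusterGraph H' U V ∧ editCost G H' ≤ editCost G H ∧ ¬ H'.Reachable a b := by
  obtain ⟨C, haC, hbC⟩ : ∃ C : H.ConnectedComponent, a ∈ C.supp ∧ b ∈ C.supp :=
    ⟨_, rfl, SimpleGraph.ConnectedComponent.sound hr.symm⟩
  have hne : a ≠ b := fun h => Set.disjoint_left.mp hG.2.1 ha (h ▸ hb)
  by_cases hNa : 2 * {y ∈ C.supp | G.Adj a y}.ncard ≤ (V ∩ C.supp).ncard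
  · exact ⟨H.splitAlong {a}, hH.splitAlong _, hH.editCost_splitAlong_singleton_le hG ha haC hNa,
      SimpleGraph.not_reachable_splitAlong rfl hne.symm⟩
  by_cases hMb : 2 * {x ∈ C.supp | G.Adj b x}.ncard ≤ (U ∩ C.supp).ncard
  · exact ⟨H.splitAlong {b}, hH.splitAlong _,
      hH.symm.editCost_splitAlong_singleton_le hG.symm hb hbC hMb,
      fun h => SimpleGraph.not_reachable_splitAlong (Set.mem_singleton b) hne h.symm⟩
  refine ⟨_, hH.splitAlong _,
    hH.editCost_splitAlong_neighborSets_le hG ha hb hpath (by omega) (by omega),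
    SimpleGraph.not_reachable_splitAlong (Or.inl ⟨⟨ha, haC⟩, fun h => hadj h.2.symm⟩) ?_⟩
  rintro (⟨⟨hbU, _⟩, _⟩ | ⟨_, hab⟩)
  · exact Set.disjoint_left.mp hG.2.1 hbU hb
  · exact hadj hab

lemma exists_separating [Finite α] (hH : IsBiclusterGraph H U V) (hG : IsBipartiteWith G U V)
    (hw : ∀ w : G.Walk a b, 4 ≤ w.length) :
    ∃ H', IsBiclusterGraph H' U V ∧ editCost G H' ≤ editCost G H ∧ ¬ H'.Reachable a b := by
  by_cases hr : H.Reachable a b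
  swap
  · exact ⟨H, hH, le_rfl, hr⟩
  have hne : a ≠ b := by rintro rfl; simpa using hw .nil
  have hadj : ¬ G.Adj a b := fun h => by simpa using hw (.cons h .nil)
  have hcommon : ∀ y, G.Adj a y → ¬ G.Adj b y := fun y hay hby => by
    simpa using hw (.cons hay (.cons hby.symm .nil))
  have hpath : ∀ x y, G.Adj a y → G.Adj y x → ¬ G.Adj x b := fun x y hay hyx hxb => by
    simpa using hw (.cons hay (.cons hyx (.cons hxb .nil)))
  rcases hG.1 a with ha | ha <;> rcases hG.1 b with hb | hb
  · exact hH.exists_separating_of_mem_same_part hG ha hb hr hne hcommon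
  · exact hH.exists_separating_of_mem_opposite_parts hG ha hb hr hadj hpath
  · obtain ⟨H', hH', hcost, hsep⟩ := hH.symm.exists_separating_of_mem_opposite_parts hG.symm
      ha hb hr hadj hpath
    exact ⟨H', hH'.symm, hcost, hsep⟩
  · obtain ⟨H', hH', hcost, hsep⟩ := hH.symm.exists_separating_of_mem_same_part hG.symm
      ha hb hr hne hcommon
    exact ⟨H', hH'.symm, hcost, hsep⟩

end IsBiclusterGraph

/-- If `a`, `b` lie in different components of `G` or are at distance at least `4`, then
there is an optimal bicluster editing of `G` in which `a`, `b` lie in distinct biclusters. -/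
theorem exists_optimal_editing_separating [Fintype α] (G : SimpleGraph α) (U V : Set α)
    (hG : IsBipartiteWith G U V) (a b : α)
    (hab : ¬ G.Reachable a b ∨ 4 ≤ G.dist a b) :
    ∃ H : SimpleGraph α, IsOptimalBiclusterEditing G H U V ∧ ¬ H.Reachable a b := by
  obtain ⟨H, hH, hHmin⟩ := exists_isOptimalBiclusterEditing G hG.1 hG.2.1
  have hw : ∀ w : G.Walk a b, 4 ≤ w.length := by
    rcases hab with h | h
    · exact fun w => absurd ⟨w⟩ h
    · exact fun w => h.trans (SimpleGraph.dist_le w)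
  obtain ⟨H', hH', hcost, hsep⟩ := hH.exists_separating hG hw
  exact ⟨H', ⟨hH', fun H'' hH'' => hcost.trans (hHmin H'' hH'')⟩, hsep⟩
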